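/- Let p ≥ 2 be an integer, s ∈ 𝒮_p and c ≥ 1 an integer. Then the generalized blancmange function B(s,c) is not affine on any nonempty open subinterval of [0,1]: for all 0 ≤ α < β ≤ 1, there do not exist real numbers a and q such that B(s,c)(t) = a·t + q for all t ∈ (α, β). -/

import Mathlib

/-!
Splitting off the first `k` terms of the series gives `B t = B_k t + B (b^k t) / b^k`, and the
partial sum `B_k` is affine on every `b`-adic interval `[m / b^k, (m + 1) / b^k]`, because `p ∣ b`
makes each `s_j` with `j < k` affine there. Every open interval contains such an interval, so if `B`
were affine on it, `B (b^k ·)` would be affine there, i.e. (`B` being `1`-periodic) `B` would be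
affine on `[0, 1]`. Since `B 0 = B 1 = 0`, `B` would vanish on `[0, 1]`; but
`B (i₀ / p) = s (i₀ / p) + B (c i₀) / b = s (i₀ / p) ≠ 0`.
-/

open Filter

/-- A generator `s ∈ 𝒮_p`: a continuous `1`-periodic function with `s 0 = 0`, affine on each
interval `[i/p, (i+1)/p]` for `0 ≤ i < p`, and nonzero at some interior grid point `i₀/p`. -/
def IsGenerator (p : ℕ) (s : ℝ → ℝ) : Prop :=
  Continuous s ∧ (∀ t : ℝ, s (t + 1) = s t) ∧ s 0 = 0 ∧
    (∀ i : ℕ, i < p → ∃ a q : ℝ,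
      ∀ t ∈ Set.Icc ((i : ℝ) / p) (((i : ℝ) + 1) / p), s t = a * t + q) ∧
    (∃ i₀ : ℕ, 0 < i₀ ∧ i₀ < p ∧ s ((i₀ : ℝ) / p) ≠ 0)

/-- `s_k(t) = s(b^k t)/b^k`. -/
noncomputable def genk (s : ℝ → ℝ) (b : ℕ) (k : ℕ) (t : ℝ) : ℝ :=
  s ((b : ℝ) ^ k * t) / (b : ℝ) ^ k

/-- Partial sums `B_n(t) = ∑_{k<n} s_k(t)`. -/
noncomputable def genBN (s : ℝ → ℝ) (b : ℕ) (n : ℕ) (t : ℝ) : ℝ :=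
  ∑ k ∈ Finset.range n, genk s b k t

/-- The generalized blancmange function `B(s,c)(t) = ∑_{k=0}^∞ s(b^k t)/b^k`, `b = c·p`. -/
noncomputable def genB (s : ℝ → ℝ) (b : ℕ) (t : ℝ) : ℝ := ∑' k : ℕ, genk s b k t

open Set Function

def IsAffineOn (f : ℝ → ℝ) (S : Set ℝ) : Prop :=
  ∃ a q : ℝ, ∀ t ∈ S, f t = a * t + q

theorem isAffineOn_mul_add (S : Set ℝ) (a q : ℝ) : IsAffineOn (fun t => a * t + q) S :=
  ⟨a, q, fun _ _ => rfl⟩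

theorem isAffineOn_mul (S : Set ℝ) (a : ℝ) : IsAffineOn (fun t => a * t) S :=
  ⟨a, 0, fun _ _ => (add_zero _).symm⟩

namespace IsAffineOn

variable {f g : ℝ → ℝ} {S T : Set ℝ}

theorem mono (hf : IsAffineOn f S) (hTS : T ⊆ S) : IsAffineOn f T :=
  let ⟨a, q, h⟩ := hf
  ⟨a, q, fun t ht => h t (hTS ht)⟩

theorem congr (hf : IsAffineOn f S) (hfg : EqOn f g S) : IsAffineOn g S :=
  let ⟨a, q, h⟩ := hf
  ⟨a, q, fun t ht => (hfg ht).symm.trans (h t ht)⟩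

theorem add (hf : IsAffineOn f S) (hg : IsAffineOn g S) : IsAffineOn (f + g) S :=
  let ⟨a, q, h⟩ := hf
  let ⟨a', q', h'⟩ := hg
  ⟨a + a', q + q', fun t ht => by rw [Pi.add_apply, h t ht, h' t ht]; ring⟩

theorem sub (hf : IsAffineOn f S) (hg : IsAffineOn g S) : IsAffineOn (f - g) S :=
  let ⟨a, q, h⟩ := hf
  let ⟨a', q', h'⟩ := hg
  ⟨a - a', q - q', fun t ht => by rw [Pi.sub_apply, h t ht, h' t ht]; ring⟩

theorem const_mul (hf : IsAffineOn f S) (r : ℝ) : IsAffineOn (fun t => r * f t) S :=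
  let ⟨a, q, h⟩ := hf
  ⟨r * a, r * q, fun t ht => by dsimp only; rw [h t ht]; ring⟩

theorem comp (hf : IsAffineOn f S) (hg : IsAffineOn g T) (hgT : MapsTo g T S) :
    IsAffineOn (f ∘ g) T :=
  let ⟨a, q, h⟩ := hf
  let ⟨a', q', h'⟩ := hg
  ⟨a * a', a * q' + q, fun t ht => by rw [comp_apply, h _ (hgT ht), h' t ht]; ring⟩

theorem sum {ι : Type*} (u : Finset ι) {F : ι → ℝ → ℝ} (hF : ∀ i ∈ u, IsAffineOn (F i) S) :
    IsAffineOn (∑ i ∈ u, F i) S :=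
  Finset.sum_induction F (IsAffineOn · S) (fun _ _ => add) ⟨0, 0, fun _ _ => by simp⟩ hF

theorem eqOn_zero_of_Icc (hf : IsAffineOn f (Icc 0 1)) (h0 : f 0 = 0) (h1 : f 1 = 0) :
    EqOn f 0 (Icc 0 1) := by
  obtain ⟨a, q, h⟩ := hf
  have hq : q = 0 := by simpa [h0] using (h 0 (by simp)).symm
  have ha : a = 0 := by simpa [h1, hq] using (h 1 (by simp)).symm
  intro t ht
  simp [h t ht, ha, hq]

end IsAffineOn

def gridCell (n : ℕ) (m : ℤ) : Set ℝ := Icc (m / n) ((m + 1) / n)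

theorem gridCell_mul_subset {d e : ℕ} (hd : 0 < d) (he : 0 < e) (m : ℤ) :
    gridCell (d * e) m ⊆ gridCell d (m / e) := by
  have hdR : (0 : ℝ) < d := by exact_mod_cast hd
  have heR : (0 : ℝ) < e := by exact_mod_cast he
  have hlo : ((m / e : ℤ) : ℝ) * e ≤ m := by
    exact_mod_cast Int.ediv_mul_le m (by omega : (e : ℤ) ≠ 0)
  have hhi : (m : ℝ) + 1 ≤ (((m / e : ℤ) : ℝ) + 1) * e := by
    exact_mod_cast Int.lt_ediv_add_one_mul_self m (by omega : (0 : ℤ) < e)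
  rintro t ⟨ht₁, ht₂⟩
  push_cast at ht₁ ht₂
  constructor
  · refine le_trans ?_ ht₁
    rw [div_le_div_iff₀ hdR (by positivity)]
    nlinarith
  · refine ht₂.trans ?_
    rw [div_le_div_iff₀ (by positivity) hdR]
    nlinarith

theorem mapsTo_mul_gridCell {d : ℕ} (hd : 0 < d) (e : ℕ) (m : ℤ) :
    MapsTo (fun t => (d : ℝ) * t) (gridCell (d * e) m) (gridCell e m) := by
  have hdR : (d : ℝ) ≠ 0 := by positivity
  have key : ∀ x : ℝ, x / e = d * (x / ((d * e : ℕ) : ℝ)) := fun x => by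
    rw [← mul_div_assoc, Nat.cast_mul, mul_div_mul_left _ _ hdR]
  rintro t ⟨ht₁, ht₂⟩
  refine ⟨?_, ?_⟩ <;> simp only [key] <;> gcongr

theorem mapsTo_gridCell_of_Icc {n : ℕ} (hn : 0 < n) (m : ℤ) :
    MapsTo (fun u => (n : ℝ)⁻¹ * u + m / n) (Icc 0 1) (gridCell n m) := by
  rintro u ⟨hu₀, hu₁⟩
  have hnR : (0 : ℝ) < n := by exact_mod_cast hn
  constructor <;> simp only <;> rw [← div_eq_inv_mul, ← add_div] <;>
    exact div_le_div_of_nonneg_right (by linarith) hnR.le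

theorem exists_gridCell_subset_Ioo {b : ℕ} (hb : 1 < b) {α β : ℝ} (hαβ : α < β) :
    ∃ k : ℕ, ∃ m : ℤ, gridCell (b ^ k) m ⊆ Ioo α β := by
  obtain ⟨k, hk⟩ := pow_unbounded_of_one_lt (2 / (β - α)) (by exact_mod_cast hb : (1 : ℝ) < b)
  have hbk : (0 : ℝ) < (b : ℝ) ^ k := by positivity
  have hwide : 2 < (β - α) * (b : ℝ) ^ k := by rwa [div_lt_iff₀' (sub_pos.2 hαβ)] at hk
  have hfloor := Int.floor_le (α * (b : ℝ) ^ k)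
  have hfloor' := Int.lt_floor_add_one (α * (b : ℝ) ^ k)
  refine ⟨k, ⌊α * (b : ℝ) ^ k⌋ + 1, fun t ⟨ht₁, ht₂⟩ => ⟨?_, ?_⟩⟩
  · push_cast at ht₁
    exact lt_of_lt_of_le ((lt_div_iff₀ hbk).2 hfloor') ht₁
  · push_cast at ht₂
    refine lt_of_le_of_lt ht₂ ((div_lt_iff₀ hbk).2 ?_)
    linarith

section Blancmange

variable {s : ℝ → ℝ} {b : ℕ}

theorem genk_add (j k : ℕ) (t : ℝ) :
    genk s b (j + k) t = genk s b j ((b : ℝ) ^ k * t) / (b : ℝ) ^ k := by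
  rw [genk, genk, div_div, ← pow_add, ← mul_assoc, ← pow_add]

theorem norm_genk_le {M : ℝ} (hM : ∀ t, ‖s t‖ ≤ M) (hb : 0 < b) (k : ℕ) (t : ℝ) :
    ‖genk s b k t‖ ≤ M * (b : ℝ)⁻¹ ^ k := by
  rw [genk, norm_div, Real.norm_of_nonneg (r := (b : ℝ) ^ k) (by positivity), inv_pow,
    ← div_eq_mul_inv]
  exact div_le_div_of_nonneg_right (hM _) (by positivity)

theorem summable_genk {M : ℝ} (hM : ∀ t, ‖s t‖ ≤ M) (hb : 1 < b) (t : ℝ) :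
    Summable fun k => genk s b k t :=
  .of_norm_bounded ((summable_geometric_of_lt_one (by positivity)
    (inv_lt_one_of_one_lt₀ (by exact_mod_cast hb))).mul_left M) (norm_genk_le hM (by omega) · t)

theorem genB_eq_genBN_add (hsum : ∀ t, Summable fun k => genk s b k t) (k : ℕ) (t : ℝ) :
    genB s b t = genBN s b k t + genB s b ((b : ℝ) ^ k * t) / (b : ℝ) ^ k := by
  rw [genB, ← (hsum t).sum_add_tsum_nat_add k, genB, ← tsum_div_const]
  simp only [genBN, genk_add]

theorem genB_add_intCast (hper : Periodic s 1) (t : ℝ) (z : ℤ) :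
    genB s b (t + z) = genB s b t := by
  refine tsum_congr fun k => ?_
  have hshift : (b : ℝ) ^ k * (t + z) = (b : ℝ) ^ k * t + ((b ^ k * z : ℤ) : ℝ) * 1 := by
    push_cast; ring
  rw [genk, genk, hshift, hper.int_mul _ _]

theorem genB_zero (h0 : s 0 = 0) : genB s b 0 = 0 := by
  simp [genB, genk, h0]

end Blancmange

namespace IsGenerator

variable {p b : ℕ} {s : ℝ → ℝ}

theorem one_lt (hs : IsGenerator p s) : 1 < p := by
  obtain ⟨i₀, hi₀, hi₀p, -⟩ := hs.2.2.2.2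
  omega

theorem isAffineOn_gridCell_self (hs : IsGenerator p s) (i : ℤ) :
    IsAffineOn s (gridCell p i) := by
  have hp : (0 : ℤ) < p := by exact_mod_cast hs.one_lt.le
  have hpR : (0 : ℝ) < p := by exact_mod_cast hp
  obtain ⟨-, hper, -, haff, -⟩ := hs
  obtain ⟨r, hr⟩ := Int.eq_ofNat_of_zero_le (Int.emod_nonneg i hp.ne')
  have hrp : r < p := by have := Int.emod_lt_of_pos i hp; omega
  have hi : (i : ℝ) = r + p * (i / p : ℤ) := by
    exact_mod_cast (hr ▸ Int.emod_add_mul_ediv i p).symm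
  obtain ⟨a, q, h⟩ := haff r hrp
  have hshift : MapsTo (fun t => 1 * t + -((i / p : ℤ) : ℝ)) (gridCell p i)
      (Icc ((r : ℝ) / p) (((r : ℝ) + 1) / p)) := by
    rintro t ⟨ht₁, ht₂⟩
    rw [hi] at ht₁ ht₂
    constructor
    · rw [div_le_iff₀ hpR] at *; nlinarith
    · rw [le_div_iff₀ hpR] at *; nlinarith
  refine (IsAffineOn.comp ⟨a, q, h⟩ (isAffineOn_mul_add _ _ _) hshift).congr fun t _ => ?_
  simpa [sub_eq_add_neg] using (show Periodic s 1 from hper).sub_int_mul_eq (i / p) (x := t)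

theorem isAffineOn_gridCell (hs : IsGenerator p s) {n : ℕ} (hpn : p ∣ n) (hn : 0 < n) (m : ℤ) :
    IsAffineOn s (gridCell n m) := by
  obtain ⟨e, rfl⟩ := hpn
  exact (hs.isAffineOn_gridCell_self _).mono
    (gridCell_mul_subset (by have := hs.one_lt; omega) (Nat.pos_of_mul_pos_left hn) m)

theorem isAffineOn_genk (hs : IsGenerator p s) (hpb : p ∣ b) (hb : 0 < b) {j k : ℕ} (hjk : j < k)
    (m : ℤ) : IsAffineOn (genk s b j) (gridCell (b ^ k) m) := by
  obtain ⟨l, rfl⟩ : ∃ l, k = j + l := ⟨k - j, by omega⟩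
  have hs' := hs.isAffineOn_gridCell (dvd_pow hpb (by omega : l ≠ 0)) (pow_pos hb l) m
  rw [pow_add]
  refine ((hs'.comp (isAffineOn_mul _ _) (mapsTo_mul_gridCell (pow_pos hb j) _ m)).const_mul
    ((b : ℝ) ^ j)⁻¹).congr fun t _ => ?_
  simp [genk, div_eq_inv_mul]

theorem isAffineOn_genBN (hs : IsGenerator p s) (hpb : p ∣ b) (hb : 0 < b) (k : ℕ) (m : ℤ) :
    IsAffineOn (genBN s b k) (gridCell (b ^ k) m) :=
  (IsAffineOn.sum (Finset.range k) fun j hj =>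
    hs.isAffineOn_genk hpb hb (Finset.mem_range.1 hj) m).congr fun t _ => by simp [genBN]

theorem summable_genk (hs : IsGenerator p s) (hb : 1 < b) (t : ℝ) :
    Summable fun k => genk s b k t := by
  obtain ⟨M, hM⟩ := isBounded_iff_forall_norm_le.mp
    ((show Periodic s 1 from hs.2.1).isBounded_of_continuous one_ne_zero hs.1)
  exact _root_.summable_genk (fun t => hM _ (mem_range_self t)) hb t

theorem isAffineOn_genB_Icc_of_gridCell (hs : IsGenerator p s) (hpb : p ∣ b) (hb : 1 < b)
    {k : ℕ} {m : ℤ} (hB : IsAffineOn (genB s b) (gridCell (b ^ k) m)) :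
    IsAffineOn (genB s b) (Icc 0 1) := by
  have hscaled : IsAffineOn (fun t => genB s b ((b : ℝ) ^ k * t)) (gridCell (b ^ k) m) :=
    ((hB.sub (hs.isAffineOn_genBN hpb (by omega) k m)).const_mul ((b : ℝ) ^ k)).congr
      fun t _ => by
        dsimp only [Pi.sub_apply]
        rw [genB_eq_genBN_add (hs.summable_genk hb) k t]
        field_simp
        ring
  refine (hscaled.comp (isAffineOn_mul_add _ _ _)
    (mapsTo_gridCell_of_Icc (pow_pos (by omega) k) m)).congr fun u _ => ?_
  have hrescale : (b : ℝ) ^ k * (((b ^ k : ℕ) : ℝ)⁻¹ * u + m / ((b ^ k : ℕ) : ℝ)) = u + m := by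
    push_cast
    field_simp
  simp only [comp_apply, hrescale, genB_add_intCast hs.2.1]

theorem not_isAffineOn_genB_Icc (hs : IsGenerator p s) (hpb : p ∣ b) (hb : 1 < b) :
    ¬ IsAffineOn (genB s b) (Icc 0 1) := by
  intro hB
  have hsum := hs.summable_genk hb
  obtain ⟨-, hper, h0, -, i₀, -, hi₀p, hs₀⟩ := hs
  have hvanish : EqOn (genB s b) 0 (Icc 0 1) := hB.eqOn_zero_of_Icc (genB_zero h0)
    (by simpa [genB_zero h0] using genB_add_intCast (b := b) hper 0 1)
  have hmem : (i₀ : ℝ) / p ∈ Icc 0 1 :=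
    ⟨by positivity, div_le_one_of_le₀ (by exact_mod_cast hi₀p.le) (by positivity)⟩
  obtain ⟨e, rfl⟩ := hpb
  have hint : ((p * e : ℕ) : ℝ) ^ 1 * (i₀ / p) = 0 + ((e * i₀ : ℕ) : ℤ) := by
    have : (p : ℝ) ≠ 0 := by exact_mod_cast (by omega : p ≠ 0)
    rw [zero_add]
    push_cast
    field_simp
  have hsplit := genB_eq_genBN_add hsum 1 ((i₀ : ℝ) / p)
  rw [hvanish hmem, hint, genB_add_intCast hper, genB_zero h0] at hsplit
  exact hs₀ (by simpa [genBN, genk] using hsplit.symm)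

theorem not_isAffineOn_genB_Ioo (hs : IsGenerator p s) (hpb : p ∣ b) (hb : 1 < b) {α β : ℝ}
    (hαβ : α < β) : ¬ IsAffineOn (genB s b) (Ioo α β) := fun hB =>
  let ⟨_, _, hcell⟩ := exists_gridCell_subset_Ioo hb hαβ
  hs.not_isAffineOn_genB_Icc hpb hb
    (hs.isAffineOn_genB_Icc_of_gridCell hpb hb (hB.mono hcell))

end IsGenerator

theorem stmt12_general (p : ℕ) (s : ℝ → ℝ) (hs : IsGenerator p s)
    (c : ℕ) (hc : 1 ≤ c) :
    ∀ α β : ℝ, 0 ≤ α → α < β → β ≤ 1 →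
      ¬ ∃ a q : ℝ, ∀ t ∈ Set.Ioo α β, genB s (c * p) t = a * t + q := by
  intro α β _ hαβ _
  exact hs.not_isAffineOn_genB_Ioo (dvd_mul_left p c)
    (hs.one_lt.trans_le (Nat.le_mul_of_pos_left p hc)) hαβ

/-- The generalized blancmange function `B(s,c)` (with `b = c·p`) is not affine on any
nonempty open subinterval of `[0,1]`. -/
theorem stmt12 (p : ℕ) (hp : 2 ≤ p) (s : ℝ → ℝ) (hs : IsGenerator p s)
    (c : ℕ) (hc : 1 ≤ c) :
    ∀ α β : ℝ, 0 ≤ α → α < β → β ≤ 1 →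
      ¬ ∃ a q : ℝ, ∀ t ∈ Set.Ioo α β, genB s (c * p) t = a * t + q :=
  stmt12_general p s hs c hc
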